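/- Let F be a field and f : F^n → F^m a polynomial mapping. If for some d, s, r, n, m ≥ 1 one has dim A^d_hom(f) ≥ binomial(rd + s - 1, rd) + 1 (where binomial(rd+s-1, rd) = dim Pol^{rd}_hom(F^s)), then f is (s, r)-weakly elusive. -/

import Mathlib

/-!
If the image of `f` lies in the image of `Γ = (p₁, …, pₘ)` with every `pᵢ` homogeneous of
degree `r`, then substituting `Γ` sends `Pol^d_hom(F^m)` linearly into `Pol^{rd}_hom(F^s)`, and
every polynomial it kills vanishes on the image of `Γ`, hence on that of `f`. So `A^d_hom(f)` is
a quotient of the image of the substitution and has dimension at most `C(rd + s - 1, rd)`.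
-/

open MvPolynomial

/-- `g : F^s → F^κ` is a homogeneous polynomial mapping of degree `r`. -/
def IsHomPolyMap (F : Type*) [CommSemiring F] (s : ℕ) {κ : Type*} (r : ℕ)
    (g : (Fin s → F) → κ → F) : Prop :=
  ∃ p : κ → MvPolynomial (Fin s) F,
    (∀ i, (p i).IsHomogeneous r) ∧ ∀ x i, g x i = eval x (p i)

/-- `g : F^s → F^κ` is a polynomial mapping of degree at most `r`. -/
def IsPolyMapDeg (F : Type*) [CommSemiring F] (s : ℕ) {κ : Type*} (r : ℕ)
    (g : (Fin s → F) → κ → F) : Prop :=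
  ∃ p : κ → MvPolynomial (Fin s) F,
    (∀ i, (p i).totalDegree ≤ r) ∧ ∀ x i, g x i = eval x (p i)

/-- `f` is `(s,r)`-weakly elusive. -/
def WeaklyElusive {F : Type*} [CommSemiring F] {n : ℕ} {κ : Type*}
    (f : (Fin n → F) → κ → F) (s r : ℕ) : Prop :=
  ∀ g : (Fin s → F) → κ → F, IsHomPolyMap F s r g → ¬ Set.range f ⊆ Set.range g

/-- `f` is `(s,r)`-elusive. -/
def Elusive {F : Type*} [CommSemiring F] {n : ℕ} {κ : Type*}
    (f : (Fin n → F) → κ → F) (s r : ℕ) : Prop :=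
  ∀ g : (Fin s → F) → κ → F, IsPolyMapDeg F s r g → ¬ Set.range f ⊆ Set.range g

/-- The subspace of `Pol^d_hom(F^m)` of homogeneous degree-`d` polynomials vanishing on `S`. -/
def vanishingOn {F : Type*} [CommRing F] {m : ℕ} (S : Set (Fin m → F)) (d : ℕ) :
    Submodule F (homogeneousSubmodule (Fin m) F d) where
  carrier := {p | ∀ x ∈ S, eval x (p : MvPolynomial (Fin m) F) = 0}
  add_mem' := by
    intro a b ha hb x hx
    simp [ha x hx, hb x hx]
  zero_mem' := by intro x hx; simp
  smul_mem' := by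
    intro c a ha x hx
    simp [ha x hx]

/-- `A^d_hom(f)`, the quotient of `Pol^d_hom(F^m)` by the homogeneous degree-`d` polynomials
vanishing on the image of `f`. -/
abbrev Ahom {F : Type*} [CommRing F] {n m : ℕ} (f : (Fin n → F) → Fin m → F) (d : ℕ) :=
  (homogeneousSubmodule (Fin m) F d) ⧸ vanishingOn (Set.range f) d

theorem LinearMap.finrank_quotient_le_of_ker_le {K V W : Type*} [DivisionRing K]
    [AddCommGroup V] [Module K V] [AddCommGroup W] [Module K W] [FiniteDimensional K W]
    (φ : V →ₗ[K] W) {U : Submodule K V} (h : LinearMap.ker φ ≤ U) :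
    Module.finrank K (V ⧸ U) ≤ Module.finrank K W := by
  have : FiniteDimensional K (V ⧸ LinearMap.ker φ) := .equiv φ.quotKerEquivRange.symm
  calc Module.finrank K (V ⧸ U) ≤ Module.finrank K (V ⧸ LinearMap.ker φ) :=
        LinearMap.finrank_le_finrank_of_surjective (Submodule.factor_surjective h)
    _ = Module.finrank K (LinearMap.range φ) := φ.quotKerEquivRange.finrank_eq
    _ ≤ Module.finrank K W := Submodule.finrank_le _

namespace MvPolynomial

noncomputable def degreeEqEquivSym (σ : Type*) [DecidableEq σ] (N : ℕ) :
    {d : σ →₀ ℕ | d.degree = N} ≃ Sym σ N :=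
  ((Sym.equivNatSum σ N).trans (Equiv.subtypeEquivRight fun _ => Iff.rfl)).symm

variable {R : Type*} [CommRing R]

instance {σ : Type*} [Finite σ] (N : ℕ) : Module.Finite R (homogeneousSubmodule σ R N) :=
  Module.Finite.iff_fg.mpr (homogeneousSubmodule_fg σ R N)

theorem finrank_homogeneousSubmodule [StrongRankCondition R] (σ : Type*) [Fintype σ] (N : ℕ) :
    Module.finrank R (homogeneousSubmodule σ R N) = (N + Fintype.card σ - 1).choose N := by
  classical
  have := Fintype.ofEquiv _ (degreeEqEquivSym σ N).symm
  rw [((LinearEquiv.ofEq _ _ (homogeneousSubmodule_eq_finsupp_supported σ R N)).trans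
      (AddMonoidAlgebra.supportedEquivFinsupp _)).finrank_eq, Module.finrank_finsupp_self,
    Fintype.card_congr (degreeEqEquivSym σ N), Sym.card_sym_eq_choose, add_comm]

theorem eval_aeval {σ τ : Type*} (p : σ → MvPolynomial τ R) (y : τ → R) (q : MvPolynomial σ R) :
    eval y (aeval p q) = eval (fun i => eval y (p i)) q :=
  aeval_bind₁ y p q

variable {σ τ : Type*} {r : ℕ} (p : σ → MvPolynomial τ R) (hp : ∀ i, (p i).IsHomogeneous r)

noncomputable def homogeneousSubst (d : ℕ) :
    homogeneousSubmodule σ R d →ₗ[R] homogeneousSubmodule τ R (r * d) :=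
  ((aeval p).toLinearMap ∘ₗ (homogeneousSubmodule σ R d).subtype).codRestrict _
    fun q => q.2.aeval p hp

@[simp]
theorem coe_homogeneousSubst_apply (d : ℕ) (q : homogeneousSubmodule σ R d) :
    (homogeneousSubst p hp d q : MvPolynomial τ R) = aeval p (q : MvPolynomial σ R) :=
  rfl

end MvPolynomial

theorem ker_homogeneousSubst_le_vanishingOn {F : Type*} [CommRing F] {m : ℕ} {τ : Type*} {r : ℕ}
    (p : Fin m → MvPolynomial τ F) (hp : ∀ i, (p i).IsHomogeneous r) {S : Set (Fin m → F)}
    (hS : S ⊆ Set.range fun y i => eval y (p i)) (d : ℕ) :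
    LinearMap.ker (homogeneousSubst p hp d) ≤ vanishingOn S d := by
  intro q hq x hx
  obtain ⟨y, rfl⟩ := hS hx
  rw [← eval_aeval, ← coe_homogeneousSubst_apply p hp, LinearMap.mem_ker.mp hq]
  exact map_zero _

theorem finrank_Ahom_le_of_range_subset {F : Type*} [Field F] {n m s r : ℕ}
    {f : (Fin n → F) → Fin m → F} (p : Fin m → MvPolynomial (Fin s) F)
    (hp : ∀ i, (p i).IsHomogeneous r) (hf : Set.range f ⊆ Set.range fun y i => eval y (p i))
    (d : ℕ) : Module.finrank F (Ahom f d) ≤ (r * d + s - 1).choose (r * d) := by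
  simpa only [finrank_homogeneousSubmodule, Fintype.card_fin] using
    (homogeneousSubst p hp d).finrank_quotient_le_of_ker_le
      (ker_homogeneousSubst_le_vanishingOn p hp hf d)

theorem stmt4_general {F : Type*} [Field F] {n m s r d : ℕ}
    (f : (Fin n → F) → Fin m → F)
    (hdim : Nat.choose (r * d + s - 1) (r * d) + 1 ≤ Module.finrank F (Ahom f d)) :
    WeaklyElusive f s r := by
  rintro g ⟨p, hp, hg⟩ hsub
  obtain rfl : g = fun y i => eval y (p i) := funext₂ hg
  have := finrank_Ahom_le_of_range_subset p hp hsub d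
  omega

/-- Counting criterion with the explicit binomial coefficient
`dim Pol^{rd}_hom(F^s) = C(rd + s - 1, rd)`: if `dim A^d_hom(f) ≥ C(rd+s-1, rd) + 1`
then `f` is `(s,r)`-weakly elusive. -/
theorem stmt4 {F : Type*} [Field F] {n m s r d : ℕ}
    (hd : 1 ≤ d) (hs : 1 ≤ s) (hr : 1 ≤ r) (hn : 1 ≤ n) (hm : 1 ≤ m)
    (f : (Fin n → F) → Fin m → F) (hf : ∃ e, IsPolyMapDeg F n e f)
    (hdim : Nat.choose (r * d + s - 1) (r * d) + 1 ≤ Module.finrank F (Ahom f d)) :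
    WeaklyElusive f s r :=
  stmt4_general f hdim
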